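/- arXiv:1909.11369 — 3 statements merged into one kernel-verified Lean document; each statement's English description precedes it below -/
import Mathlib

section
/- Suppose a finite set Y of nodes of a rooted binary tree T is repeatedly processed as follows: while at least k+1 elements of Y remain in the tree, remove a minimal (with respect to inclusion) subtree containing at least k+1 elements of Y. Then each removed subtree contains at most 2k+1 elements of Y, and the procedure produces at least ⌊|Y|/(2k+1)⌋ pairwise disjoint subtrees. -/
/-- The set of nodes of the subtree rooted at `v`, in a rooted tree given by a
parent function: `v` together with all its descendants. -/
def subtree {T : Type*} (parent : T → Option T) (v : T) : Set T :=
  {x | Relation.ReflTransGen (fun p q => parent q = some p) v x}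

/-!
Call a subtree heavy if it contains more than `k` of the elements of `Y` not yet removed. A
heavy subtree of minimal size has light child subtrees (they are strictly smaller, since a
rooted tree has no cycles), so with at most two children it holds at most `2k + 1` remaining
elements. Greedily removing such subtrees while more than `k` elements remain produces pieces
with between `k + 1` and `2k + 1` elements each, whence `|Y| ≤ (2k + 1) n + k` for the number
`n` of pieces.
-/

open Function

lemma Set.ncard_biUnion_le_ncard_mul {ι α : Type*} {s : Set ι} (hs : s.Finite) {f : ι → Set α}
    {k : ℕ} (hf : ∀ i ∈ s, (f i).ncard ≤ k) : (⋃ i ∈ s, f i).ncard ≤ s.ncard * k := by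
  calc (⋃ i ∈ s, f i).ncard = (⋃ i ∈ hs.toFinset, f i).ncard := by simp
    _ ≤ ∑ i ∈ hs.toFinset, (f i).ncard := hs.toFinset.set_ncard_biUnion_le f
    _ ≤ hs.toFinset.card * k := Finset.sum_le_card_nsmul _ _ _ (by simpa using hf)
    _ = s.ncard * k := by rw [Set.ncard_eq_toFinset_card s hs]

namespace Subtree

variable {T : Type*} (parent : T → Option T)

lemma subset_of_parent_eq {v c : T} (h : parent c = some v) :
    subtree parent c ⊆ subtree parent v :=
  fun _ hx => Relation.ReflTransGen.head h hx

lemma subset_insert_biUnion_children (v : T) :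
    subtree parent v ⊆ insert v (⋃ c ∈ {c | parent c = some v}, subtree parent c) := by
  intro x hx
  rcases Relation.ReflTransGen.cases_head hx with rfl | ⟨c, hc, hcx⟩
  · exact Set.mem_insert _ _
  · exact Set.mem_insert_of_mem _ (Set.mem_biUnion hc hcx)

lemma not_transGen_self {root : T} (hroot : ∀ x, parent x = none ↔ x = root)
    (hreach : ∀ x, Relation.ReflTransGen (fun p q => parent q = some p) root x) (x : T) :
    ¬ Relation.TransGen (fun p q => parent q = some p) x x := by
  induction hreach x with
  | refl =>
    intro h
    obtain ⟨c, -, hc⟩ := Relation.TransGen.tail'_iff.mp h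
    exact Option.some_ne_none _ (hc.symm.trans ((hroot root).mpr rfl))
  | @tail b c _ hbc ih =>
    intro h
    obtain ⟨d, hcd, hdc⟩ := Relation.TransGen.tail'_iff.mp h
    obtain rfl : d = b := Option.some_injective _ (hdc.symm.trans hbc)
    exact ih (Relation.TransGen.head' hbc hcd)

lemma ssubset_of_parent_eq {root : T} (hroot : ∀ x, parent x = none ↔ x = root)
    (hreach : ∀ x, Relation.ReflTransGen (fun p q => parent q = some p) root x)
    {v c : T} (h : parent c = some v) :
    subtree parent c ⊂ subtree parent v := by
  refine ⟨subset_of_parent_eq parent h, fun hvc => ?_⟩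
  exact not_transGen_self parent hroot hreach v
    (Relation.TransGen.head' h (hvc Relation.ReflTransGen.refl))

def removed (v : ℕ → T) (n : ℕ) : Set T := ⋃ j < n, subtree parent (v j)

lemma removed_succ (v : ℕ → T) (n : ℕ) :
    removed parent v (n + 1) = removed parent v n ∪ subtree parent (v n) :=
  Set.biUnion_lt_succ _ _

lemma removed_update {v : ℕ → T} {i n : ℕ} (hi : i ≤ n) (w : T) :
    removed parent (update v n w) i = removed parent v i :=
  Set.iUnion₂_congr fun j hj => by rw [update_of_ne (by omega)]

lemma iUnion_fin_lt_eq_removed (v : ℕ → T) {n : ℕ} (i : Fin n) :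
    ⋃ (j : Fin n) (_ : j < i), subtree parent (v j) = removed parent v i := by
  ext x
  simp only [removed, Set.mem_iUnion, exists_prop]
  exact ⟨fun ⟨j, hj, hx⟩ => ⟨j, hj, hx⟩, fun ⟨j, hj, hx⟩ => ⟨⟨j, by omega⟩, hj, hx⟩⟩

lemma disjoint_diff_removed (v : ℕ → T) {i j : ℕ} (hij : i < j) :
    Disjoint (subtree parent (v i) \ removed parent v i)
      (subtree parent (v j) \ removed parent v j) :=
  Set.disjoint_left.mpr fun _ hi hj => hj.2 (Set.mem_biUnion hij hi.1)

/-- The first `n` steps of the removal procedure: `v i` is the root of the `i`-th removed subtree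
(the values of `v` from `n` on play no role). -/
def IsPeeling (Y : Set T) (k : ℕ) (v : ℕ → T) (n : ℕ) : Prop :=
  ∀ i < n, k < ((subtree parent (v i) \ removed parent v i) ∩ Y).ncard ∧
    ((subtree parent (v i) \ removed parent v i) ∩ Y).ncard ≤ 2 * k + 1

variable [Finite T]

lemma ncard_subtree_inter_le_of_children (hbin : ∀ v : T, Set.ncard {x | parent x = some v} ≤ 2)
    {A : Set T} {k : ℕ} {v : T}
    (hchildren : ∀ c, parent c = some v → (subtree parent c ∩ A).ncard ≤ k) :
    (subtree parent v ∩ A).ncard ≤ 2 * k + 1 := by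
  have hsub : subtree parent v ∩ A ⊆
      insert v (⋃ c ∈ {c | parent c = some v}, subtree parent c ∩ A) := by
    intro x ⟨hxv, hxA⟩
    rcases subset_insert_biUnion_children parent v hxv with rfl | hx
    · exact Set.mem_insert _ _
    · obtain ⟨c, hc, hxc⟩ := Set.mem_iUnion₂.mp hx
      exact Set.mem_insert_of_mem _ (Set.mem_biUnion hc ⟨hxc, hxA⟩)
  calc (subtree parent v ∩ A).ncard
      ≤ (⋃ c ∈ {c | parent c = some v}, subtree parent c ∩ A).ncard + 1 :=
        (Set.ncard_le_ncard hsub).trans (Set.ncard_insert_le _ _)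
    _ ≤ {c | parent c = some v}.ncard * k + 1 :=
        Nat.add_le_add_right (Set.ncard_biUnion_le_ncard_mul (Set.toFinite _) hchildren) 1
    _ ≤ 2 * k + 1 := by gcongr; exact hbin v

lemma exists_subtree_ncard_inter_gt_and_le {root : T} (hroot : ∀ x, parent x = none ↔ x = root)
    (hbin : ∀ v : T, Set.ncard {x | parent x = some v} ≤ 2)
    (hreach : ∀ x, Relation.ReflTransGen (fun p q => parent q = some p) root x)
    {A : Set T} {k : ℕ} (hA : k < A.ncard) :
    ∃ v, k < (subtree parent v ∩ A).ncard ∧ (subtree parent v ∩ A).ncard ≤ 2 * k + 1 := by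
  obtain ⟨v, hv, hmin⟩ := Set.exists_min_image {v | k < (subtree parent v ∩ A).ncard}
    (fun v => (subtree parent v).ncard) (Set.toFinite _)
    ⟨root, by simpa [subtree, hreach] using hA⟩
  refine ⟨v, hv, ncard_subtree_inter_le_of_children parent hbin fun c hc => ?_⟩
  by_contra! hheavy
  have hsmaller := Set.ncard_lt_ncard (ssubset_of_parent_eq parent hroot hreach hc)
  have hminimal := hmin c hheavy
  omega

lemma ncard_diff_removed_eq (Y : Set T) (v : ℕ → T) (n : ℕ) :
    (Y \ removed parent v n).ncard =
      ((subtree parent (v n) \ removed parent v n) ∩ Y).ncard +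
        (Y \ removed parent v (n + 1)).ncard := by
  rw [← Set.ncard_inter_add_ncard_sdiff_eq_ncard (Y \ removed parent v n) (subtree parent (v n)),
    removed_succ, Set.sdiff_sdiff]
  congr 2
  ext x
  simp only [Set.mem_inter_iff, Set.mem_sdiff]
  tauto

namespace IsPeeling

variable {Y : Set T} {k : ℕ} {v : ℕ → T} {n : ℕ}

lemma ncard_le (h : IsPeeling parent Y k v n) :
    Y.ncard ≤ (2 * k + 1) * n + (Y \ removed parent v n).ncard := by
  induction n with
  | zero => simp [removed]
  | succ n ih =>
    have hprev := ih fun i hi => h i (by omega)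
    have hsplit := ncard_diff_removed_eq parent Y v n
    have hpiece := (h n n.lt_succ_self).2
    rw [Nat.mul_succ]
    omega

lemma extend {root : T} (hroot : ∀ x, parent x = none ↔ x = root)
    (hbin : ∀ v : T, Set.ncard {x | parent x = some v} ≤ 2)
    (hreach : ∀ x, Relation.ReflTransGen (fun p q => parent q = some p) root x)
    (h : IsPeeling parent Y k v n) (hY : k < (Y \ removed parent v n).ncard) :
    ∃ w, IsPeeling parent Y k (update v n w) (n + 1) := by
  obtain ⟨w, hw⟩ := exists_subtree_ncard_inter_gt_and_le parent hroot hbin hreach hY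
  refine ⟨w, fun i hi => ?_⟩
  rw [removed_update parent (by omega)]
  rcases Nat.lt_succ_iff_lt_or_eq.mp hi with hi | rfl
  · rw [update_of_ne (by omega)]
    exact h i hi
  · rw [update_self, Set.sdiff_inter_right_comm, Set.inter_sdiff_assoc]
    exact hw

end IsPeeling

lemma exists_isPeeling {root : T} (hroot : ∀ x, parent x = none ↔ x = root)
    (hbin : ∀ v : T, Set.ncard {x | parent x = some v} ≤ 2)
    (hreach : ∀ x, Relation.ReflTransGen (fun p q => parent q = some p) root x)
    (Y : Set T) (k : ℕ) :
    ∃ n v, IsPeeling parent Y k v n ∧ (Y \ removed parent v n).ncard ≤ k := by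
  suffices ∀ m n v, IsPeeling parent Y k v n → (Y \ removed parent v n).ncard ≤ m + k →
      ∃ n v, IsPeeling parent Y k v n ∧ (Y \ removed parent v n).ncard ≤ k from
    this Y.ncard 0 (fun _ => root) (fun _ h => absurd h (Nat.not_lt_zero _))
      ((Set.ncard_le_ncard Set.sdiff_subset).trans (Nat.le_add_right _ _))
  intro m
  induction m with
  | zero => exact fun n v hv hY => ⟨n, v, hv, by simpa using hY⟩
  | succ m ih =>
    intro n v hv hY
    by_cases hdone : (Y \ removed parent v n).ncard ≤ k
    · exact ⟨n, v, hv, hdone⟩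
    obtain ⟨w, hw⟩ := hv.extend parent hroot hbin hreach (not_le.mp hdone)
    refine ih (n + 1) (update v n w) hw ?_
    have hsplit := ncard_diff_removed_eq parent Y (update v n w) n
    have hpiece := (hw n n.lt_succ_self).1
    rw [removed_update parent le_rfl] at hsplit hpiece
    omega

end Subtree

open Subtree in
theorem stmt4_general {T : Type*} [Finite T] (parent : T → Option T) (root : T)
    (hroot : ∀ x, parent x = none ↔ x = root)
    (hbin : ∀ v : T, Set.ncard {x | parent x = some v} ≤ 2)
    (hreach : ∀ x, Relation.ReflTransGen (fun p q => parent q = some p) root x)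
    (Y : Set T) (k : ℕ) :
    ∃ n, Y.ncard / (2 * k + 1) ≤ n ∧
      ∃ v : Fin n → T,
        (∀ i j : Fin n, i ≠ j →
          Disjoint (subtree parent (v i) \ ⋃ (j' : Fin n) (_ : j' < i), subtree parent (v j'))
                   (subtree parent (v j) \ ⋃ (j' : Fin n) (_ : j' < j), subtree parent (v j'))) ∧
        (∀ i : Fin n,
          k + 1 ≤ ((subtree parent (v i) \ ⋃ (j' : Fin n) (_ : j' < i), subtree parent (v j')) ∩ Y).ncard ∧
          ((subtree parent (v i) \ ⋃ (j' : Fin n) (_ : j' < i), subtree parent (v j')) ∩ Y).ncard ≤ 2 * k + 1) := by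
  obtain ⟨n, v, hv, hrest⟩ := exists_isPeeling parent hroot hbin hreach Y k
  have hcount := hv.ncard_le
  refine ⟨n, ?_, fun i => v i, fun i j hij => ?_, fun i => ?_⟩
  · rw [Nat.div_le_iff_le_mul_add_pred (by omega)]
    omega
  · simp only [iUnion_fin_lt_eq_removed]
    rcases lt_or_gt_of_ne (Fin.val_ne_of_ne hij) with h | h
    · exact disjoint_diff_removed parent v h
    · exact (disjoint_diff_removed parent v h).symm
  · simp only [iUnion_fin_lt_eq_removed]
    exact hv i i.isLt

/-- Repeatedly removing a minimal subtree containing at least k+1 elements of Y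
(as long as at least k+1 elements remain) yields at least ⌊|Y|/(2k+1)⌋ pairwise
disjoint pieces, each piece being a subtree minus the previously removed subtrees,
and each containing at least k+1 and at most 2k+1 elements of Y. -/
theorem stmt4 {T : Type*} [Finite T] (parent : T → Option T) (root : T)
    (hroot : ∀ x, parent x = none ↔ x = root)
    (hbin : ∀ v : T, Set.ncard {x | parent x = some v} ≤ 2)
    (hreach : ∀ x, Relation.ReflTransGen (fun p q => parent q = some p) root x)
    (Y : Set T) (k : ℕ) (hk : 1 ≤ k) :
    ∃ n, Y.ncard / (2 * k + 1) ≤ n ∧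
      ∃ v : Fin n → T,
        (∀ i j : Fin n, i ≠ j →
          Disjoint (subtree parent (v i) \ ⋃ (j' : Fin n) (_ : j' < i), subtree parent (v j'))
                   (subtree parent (v j) \ ⋃ (j' : Fin n) (_ : j' < j), subtree parent (v j'))) ∧
        (∀ i : Fin n,
          k + 1 ≤ ((subtree parent (v i) \ ⋃ (j' : Fin n) (_ : j' < i), subtree parent (v j')) ∩ Y).ncard ∧
          ((subtree parent (v i) \ ⋃ (j' : Fin n) (_ : j' < i), subtree parent (v j')) ∩ Y).ncard ≤ 2 * k + 1) :=
  stmt4_general parent root hroot hbin hreach Y k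
end

section
/- Let G be a connected graph in a minor-closed class 𝒦, with layers L_0, L_1, … around a fixed vertex v. Then for any i and r, the subgraph of G induced by L_{i+1} ∪ L_{i+2} ∪ … ∪ L_{i+r} is a minor of a graph H ∈ 𝒦 in which every vertex is within distance r of some vertex v'. In particular, if 𝒦 is also closed under minors and has locally bounded tree-width witnessed by a function f, the induced subgraph on any r consecutive layers has tree-width at most f(r). -/
/-- `H` is a minor of `G`: there are pairwise disjoint nonempty connected branch
sets in `G`, one for each vertex of `H`, such that adjacent vertices of `H` have
an edge of `G` between their branch sets. -/
def IsMinorOf {W V : Type} (H : SimpleGraph W) (G : SimpleGraph V) : Prop :=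
  ∃ f : W → Set V,
    (∀ w, (f w).Nonempty) ∧
    (∀ w, (G.induce (f w)).Connected) ∧
    (∀ w w', w ≠ w' → Disjoint (f w) (f w')) ∧
    (∀ w w', H.Adj w w' → ∃ u ∈ f w, ∃ u' ∈ f w', G.Adj u u')

/-- `G` has tree-width at most `k`: it has a tree decomposition all of whose bags
have at most `k+1` vertices. -/
def TreewidthLE {V : Type} (G : SimpleGraph V) (k : ℕ) : Prop :=
  ∃ (ι : Type) (Tr : SimpleGraph ι), Tr.Connected ∧ Tr.IsAcyclic ∧
    ∃ B : ι → Set V,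
      (∀ v, ∃ i, v ∈ B i) ∧
      (∀ u w, G.Adj u w → ∃ i, u ∈ B i ∧ w ∈ B i) ∧
      (∀ v, (Tr.induce {i | v ∈ B i}).Connected) ∧
      (∀ i, (B i).ncard ≤ k + 1)

/-!
Contracting the ball of radius `i` around `v` to a single vertex and deleting everything
beyond distance `i + r` yields a minor `H` of `G` in which every vertex is within distance `r`
of the contracted vertex: a vertex at distance `d` from `v` in `G` is at distance `d - i` from
it in `H`, by induction along a shortest path. The layers `L_{i+1}, …, L_{i+r}` survive
unchanged in `H`, so they induce a subgraph of the `r`-ball of `H`, and tree-width passes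
to subgraphs.
-/

open SimpleGraph

lemma isMinorOf_of_injective {V W : Type} {G : SimpleGraph V} {H : SimpleGraph W} (f : H →g G)
    (hf : Function.Injective f) : IsMinorOf H G :=
  ⟨fun w => {f w}, fun _ => Set.singleton_nonempty _, fun _ => Connected.of_subsingleton,
    fun _ _ hne => Set.disjoint_singleton.mpr (hf.ne hne),
    fun _ _ h => ⟨_, rfl, _, rfl, f.map_adj h⟩⟩

/-- A junk case of `TreewidthLE`: `Set.ncard` of an infinite bag is `0`. -/
lemma TreewidthLE.of_infinite {V : Type} [Infinite V] (G : SimpleGraph V) (k : ℕ) :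
    TreewidthLE G k := by
  refine ⟨Unit, ⊥, Connected.of_subsingleton, isAcyclic_bot, fun _ => (Set.univ : Set V),
    fun _ => ⟨(), trivial⟩, fun _ _ _ => ⟨(), trivial, trivial⟩, fun u => ?_, fun _ => ?_⟩
  · have : Nonempty {j : Unit | u ∈ (Set.univ : Set V)} := ⟨⟨(), trivial⟩⟩
    exact Connected.of_subsingleton
  · rw [Set.infinite_univ.ncard]
    omega

lemma TreewidthLE.of_injective {V W : Type} [Finite W] {G : SimpleGraph V} {H : SimpleGraph W}
    {k : ℕ} (h : TreewidthLE H k) (f : G →g H) (hf : Function.Injective f) :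
    TreewidthLE G k := by
  obtain ⟨ι, T, hT, hTa, B, hcover, hedge, hconn, hcard⟩ := h
  refine ⟨ι, T, hT, hTa, fun j => f ⁻¹' B j, fun u => hcover (f u),
    fun _ _ h => hedge _ _ (f.map_adj h), fun u => hconn (f u), fun j => ?_⟩
  exact (Set.ncard_le_ncard_of_injOn f (fun _ hu => hu) hf.injOn (B j).toFinite).trans (hcard j)

namespace SimpleGraph

variable {V : Type} (G : SimpleGraph V)

lemma exists_adj_dist_eq_of_dist_eq_add_one {v u : V} {d : ℕ} (h : G.dist v u = d + 1) :
    ∃ x, G.Adj x u ∧ G.dist v x = d := by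
  obtain ⟨p, hp⟩ := exists_walk_of_dist_ne_zero (u := u) (v := v) (by rw [dist_comm, h]; omega)
  cases p with
  | nil => simp at h
  | cons hadj q =>
    rename_i x
    rw [Walk.length_cons, dist_comm, h] at hp
    have hq : G.dist v x ≤ d := by
      rw [dist_comm]
      have := G.dist_le q
      omega
    refine ⟨x, hadj.symm, ?_⟩
    rcases hadj.symm.diff_dist_adj (u := v) with h' | h' | h' <;> omega

lemma mem_ball_add_one_of_dist_le {c x : V} {n : ℕ} (hr : G.Reachable x c)
    (h : G.dist x c ≤ n) : x ∈ G.ball c (n + 1) := by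
  rw [mem_ball, ← hr.coe_dist_eq_edist]
  exact_mod_cast Nat.lt_succ_of_le h

lemma dist_lt_of_mem_ball {c x : V} {n : ℕ} (h : x ∈ G.ball c n) : G.dist c x < n := by
  have hr : G.Reachable x c := reachable_of_edist_ne_top (ne_top_of_lt h)
  rw [mem_ball, ← hr.coe_dist_eq_edist] at h
  rw [dist_comm]
  exact_mod_cast h

lemma connected_induce_ball (c : V) {r : ℕ∞} (hr : 0 < r) :
    (G.induce (G.ball c r)).Connected := by
  classical
  refine G.induce_connected_of_patches c (mem_ball_self hr) fun {u} hu => ?_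
  obtain ⟨p, hp⟩ :=
    (reachable_of_edist_ne_top (ne_top_of_lt hu)).symm.exists_walk_length_eq_edist
  refine ⟨{x | x ∈ p.support}, fun x hx => ?_, p.start_mem_support, p.end_mem_support,
    p.connected_induce_support.preconnected _ _⟩
  calc G.edist x c ≤ (p.takeUntil x hx).reverse.length := edist_le _
    _ ≤ p.length := by rw [Walk.length_reverse]; exact_mod_cast p.length_takeUntil_le_length hx
    _ = G.edist u c := by rw [hp, edist_comm]
    _ < r := hu

variable {v : V} {i r : ℕ}

variable (v i r) in
def layers : Set V := {u | i + 1 ≤ G.dist v u ∧ G.dist v u ≤ i + r}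

lemma notMem_ball_of_mem_layers {u : V} (hu : u ∈ G.layers v i r) : u ∉ G.ball v (i + 1) :=
  fun hb => by
    have := G.dist_lt_of_mem_ball (n := i + 1) (by exact_mod_cast hb)
    have := hu.1
    omega

variable (v i r) in
/-- The layers `L_{i+1}, …, L_{i+r}` together with a vertex `none` standing for the contracted
ball `L_0 ∪ … ∪ L_i`. -/
def layerContraction : SimpleGraph (Option (G.layers v i r)) where
  Adj
    | some a, some b => G.Adj a b
    | none, some b | some b, none => ∃ x ∈ G.ball v (i + 1), G.Adj x b
    | none, none => False
  symm := ⟨by rintro (_ | a) (_ | b) h <;> first | exact h | exact Adj.symm h⟩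
  loopless := ⟨by rintro (_ | a) h; exacts [h, Adj.ne h rfl]⟩

lemma layerContraction_edist_none_le {u : V} (hu : u ∈ G.layers v i r) :
    (G.layerContraction v i r).edist none (some ⟨u, hu⟩) ≤ (G.dist v u - i : ℕ) := by
  have hlow : i + 1 ≤ G.dist v u := hu.1
  have hhigh : G.dist v u ≤ i + r := hu.2
  induction hd : G.dist v u generalizing u with
  | zero => omega
  | succ e ih =>
    obtain ⟨x, hxu, hxd⟩ := G.exists_adj_dist_eq_of_dist_eq_add_one hd
    have hreach : G.Reachable x v :=
      hxu.reachable.trans (Reachable.of_dist_ne_zero (by omega : G.dist v u ≠ 0)).symm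
    by_cases hei : e ≤ i
    · have hadj : (G.layerContraction v i r).Adj none (some ⟨u, hu⟩) :=
        ⟨x, G.mem_ball_add_one_of_dist_le hreach (by rw [dist_comm]; omega), hxu⟩
      rw [edist_eq_one_iff_adj.mpr hadj]
      exact_mod_cast (by omega : 1 ≤ e + 1 - i)
    · have hx : x ∈ G.layers v i r := ⟨by omega, by omega⟩
      have hadj : (G.layerContraction v i r).Adj (some ⟨x, hx⟩) (some ⟨u, hu⟩) := hxu
      set H := G.layerContraction v i r
      calc H.edist none (some ⟨u, hu⟩)
          ≤ H.edist none (some ⟨x, hx⟩) + H.edist (some ⟨x, hx⟩) (some ⟨u, hu⟩) :=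
            SimpleGraph.edist_triangle
        _ ≤ (e - i : ℕ) + 1 :=
            add_le_add (ih hx (by omega) (by omega) hxd) (edist_eq_one_iff_adj.mpr hadj).le
        _ = (e + 1 - i : ℕ) := by norm_cast; omega

lemma layerContraction_dist_none_le (w : Option (G.layers v i r)) :
    (G.layerContraction v i r).dist none w ≤ r := by
  rcases w with _ | ⟨u, hu⟩
  · simp
  · have h := ENat.toNat_le_toNat (G.layerContraction_edist_none_le hu) (ENat.natCast_ne_top _)
    rw [ENat.toNat_natCast] at h
    have : G.dist v u ≤ i + r := hu.2
    exact h.trans (by omega)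

lemma layerContraction_connected : (G.layerContraction v i r).Connected := by
  have : ∀ w, (G.layerContraction v i r).Reachable none w := by
    rintro (_ | ⟨u, hu⟩)
    · rfl
    · exact reachable_of_edist_ne_top
        (ne_top_of_le_ne_top (ENat.natCast_ne_top _) (G.layerContraction_edist_none_le hu))
  exact (connected_iff_exists_forall_reachable _).mpr ⟨none, this⟩

lemma isMinorOf_layerContraction : IsMinorOf (G.layerContraction v i r) G := by
  refine ⟨fun | none => G.ball v (i + 1) | some a => {(a : V)}, ?_, ?_, ?_, ?_⟩
  · rintro (_ | a)
    exacts [⟨v, mem_ball_self (by positivity)⟩, Set.singleton_nonempty _]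
  · rintro (_ | a)
    exacts [G.connected_induce_ball v (by positivity), Connected.of_subsingleton]
  · rintro (_ | a) (_ | b) hne
    · exact absurd rfl hne
    · exact Set.disjoint_singleton_right.mpr (G.notMem_ball_of_mem_layers b.2)
    · exact Set.disjoint_singleton_left.mpr (G.notMem_ball_of_mem_layers a.2)
    · exact Set.disjoint_singleton.mpr fun hab => hne (congrArg some (Subtype.ext hab))
  · rintro (_ | a) (_ | b) h
    · exact h.elim
    · obtain ⟨x, hx, hxb⟩ := h
      exact ⟨x, hx, b, rfl, hxb⟩
    · obtain ⟨x, hx, hxa⟩ := h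
      exact ⟨a, rfl, x, hx, hxa.symm⟩
    · exact ⟨a, rfl, b, rfl, h⟩

variable (v i r) in
def layersToBall : G.induce (G.layers v i r) →g
    (G.layerContraction v i r).induce {w | (G.layerContraction v i r).dist none w ≤ r} where
  toFun u := ⟨some u, G.layerContraction_dist_none_le _⟩
  map_rel' h := h

lemma layersToBall_injective : Function.Injective (G.layersToBall v i r) :=
  fun _ _ h => Option.some_injective _ (congrArg Subtype.val h)

lemma induce_layers_isMinorOf_layerContraction :
    IsMinorOf (G.induce (G.layers v i r)) (G.layerContraction v i r) :=
  isMinorOf_of_injective ((Embedding.induce _).toHom.comp (G.layersToBall v i r))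
    (Subtype.val_injective.comp G.layersToBall_injective)

end SimpleGraph

theorem stmt9_general (𝒦 : ∀ {V : Type}, SimpleGraph V → Prop)
    (hminor : ∀ {V W : Type} (G : SimpleGraph V) (H : SimpleGraph W),
      𝒦 G → IsMinorOf H G → 𝒦 H)
    {V : Type} (G : SimpleGraph V) (hGK : 𝒦 G)
    (v : V) (i r : ℕ) :
    (∃ (W : Type) (H : SimpleGraph W) (v' : W), 𝒦 H ∧ H.Connected ∧
        (∀ w, H.dist v' w ≤ r) ∧
        IsMinorOf (G.induce {u | i + 1 ≤ G.dist v u ∧ G.dist v u ≤ i + r}) H) ∧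
    (∀ f : ℕ → ℕ,
      (∀ {W : Type} (H : SimpleGraph W), 𝒦 H → ∀ (w : W) (s : ℕ),
        TreewidthLE (H.induce {x | H.dist w x ≤ s}) (f s)) →
      TreewidthLE (G.induce {u | i + 1 ≤ G.dist v u ∧ G.dist v u ≤ i + r}) (f r)) := by
  have hK : 𝒦 (G.layerContraction v i r) := hminor G _ hGK G.isMinorOf_layerContraction
  refine ⟨⟨_, G.layerContraction v i r, none, hK, G.layerContraction_connected,
    G.layerContraction_dist_none_le, G.induce_layers_isMinorOf_layerContraction⟩,
    fun f hf => ?_⟩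
  by_cases hfin : Finite (G.layers v i r)
  · exact (hf _ hK none r).of_injective _ G.layersToBall_injective
  · have := not_finite_iff_infinite.mp hfin
    exact TreewidthLE.of_infinite (G.induce (G.layers v i r)) _

/-- For a connected graph G in a minor-closed class 𝒦, the subgraph induced by the
layers L_{i+1} ∪ … ∪ L_{i+r} around a vertex v is a minor of a graph H ∈ 𝒦 in which
every vertex is within distance r of some vertex v'. In particular, if 𝒦 has
locally bounded tree-width witnessed by f, that induced subgraph has tree-width
at most f(r). -/
theorem stmt9 (𝒦 : ∀ {V : Type}, SimpleGraph V → Prop)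
    (hminor : ∀ {V W : Type} (G : SimpleGraph V) (H : SimpleGraph W),
      𝒦 G → IsMinorOf H G → 𝒦 H)
    {V : Type} (G : SimpleGraph V) (hG : G.Connected) (hGK : 𝒦 G)
    (v : V) (i r : ℕ) :
    (∃ (W : Type) (H : SimpleGraph W) (v' : W), 𝒦 H ∧ H.Connected ∧
        (∀ w, H.dist v' w ≤ r) ∧
        IsMinorOf (G.induce {u | i + 1 ≤ G.dist v u ∧ G.dist v u ≤ i + r}) H) ∧
    (∀ f : ℕ → ℕ,
      (∀ {W : Type} (H : SimpleGraph W), 𝒦 H → ∀ (w : W) (s : ℕ),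
        TreewidthLE (H.induce {x | H.dist w x ≤ s}) (f s)) →
      TreewidthLE (G.induce {u | i + 1 ≤ G.dist v u ∧ G.dist v u ≤ i + r}) (f r)) :=
  stmt9_general 𝒦 hminor G hGK v i r
end

section
/- Let A be a tree automaton with m states over the alphabet Σ × {0,1}^{r+1}, and let 𝒯 be a finite binary Σ-tree with a set Y of nodes, |Y| ≥ 2m^m + 2. Then there exist n = ⌊|Y| / (4m^m + 4)⌋ pairwise disjoint sets of nodes V_1, …, V_n and pairs (b_i, b_i') ∈ (V_i ∩ Y)² of distinct nodes such that for every r-tuple ā of nodes and every i, if no component of ā lies in V_i, then the runs of A on 𝒯 with pebbles placed at (ā, b_i) and at (ā, b_i') label the root of 𝒯 with the same state. -/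
/-!
Cut the tree, greedily from the leaves up, into `⌊|Y| / 4s⌋` pairwise disjoint contexts
(subtrees with at most one subtree removed, the hole), each containing `s = m^m + 1` nodes of `Y`.
With all other pebbles outside a context, the state of the run at the top of the context is a
function of the state at the hole and of the position of the last pebble inside the context;
there are only `m^m` such functions `Q → Q`, so two nodes `b ≠ b'` of `Y` in the context give
the same one, and then the two runs agree at the top of the context and hence at the root.
-/

open Function Relation

namespace PebbleTree

variable {T : Type*} (l r : T → Option T)

def IsChild (p c : T) : Prop := l p = some c ∨ r p = some c

def subtree (x : T) : Set T := {y | ReflTransGen (IsChild l r) x y}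

def context (c : T × Option T) : Set T :=
  {t | t ∈ subtree l r c.1 ∧ ∀ u ∈ c.2, t ∉ subtree l r u}

structure IsRootedTree (root : T) : Prop where
  mem_subtree_root : ∀ x, x ∈ subtree l r root
  not_isChild_root : ∀ p, ¬ IsChild l r p root
  parent_unique : ∀ {p p' x}, IsChild l r p x → IsChild l r p' x → p = p'

variable {l r}

theorem mem_subtree_self (x : T) : x ∈ subtree l r x := ReflTransGen.refl

theorem subtree_subset {x y : T} (h : y ∈ subtree l r x) : subtree l r y ⊆ subtree l r x :=
  fun _ hz => ReflTransGen.trans h hz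

theorem subtree_subset_of_isChild {x c : T} (h : IsChild l r x c) :
    subtree l r c ⊆ subtree l r x :=
  subtree_subset (ReflTransGen.single h)

theorem context_none (x : T) : context l r (x, none) = subtree l r x := by
  ext; simp [context]

theorem context_self (x : T) : context l r (x, some x) = ∅ := by
  ext; simp [context]

theorem context_subset (c : T × Option T) : context l r c ⊆ subtree l r c.1 :=
  fun _ ht => ht.1

@[simp] theorem mem_context_some {t v u : T} :
    t ∈ context l r (v, some u) ↔ t ∈ subtree l r v ∧ t ∉ subtree l r u := by
  simp [context]

namespace IsRootedTree

variable {root : T} (ht : IsRootedTree l r root)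
include ht

theorem mem_subtree_parent {u c p : T} (hc : c ∈ subtree l r u) (hne : c ≠ u)
    (hp : IsChild l r p c) : p ∈ subtree l r u := by
  obtain h | ⟨w, hw, hwc⟩ := ReflTransGen.cases_tail hc
  · exact absurd h hne
  · rwa [ht.parent_unique hp hwc]

theorem not_transGen_self (x : T) : ¬ TransGen (IsChild l r) x x := by
  suffices ∀ y ∈ subtree l r root, ¬ TransGen (IsChild l r) y y from
    this x (ht.mem_subtree_root x)
  intro y hy
  induction hy with
  | refl =>
    intro h
    obtain ⟨p, -, hp⟩ := TransGen.tail'_iff.mp h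
    exact ht.not_isChild_root p hp
  | tail _ hyc ih =>
    intro h
    obtain ⟨p, hcp, hp⟩ := TransGen.tail'_iff.mp h
    rw [ht.parent_unique hp hyc] at hcp
    exact ih (TransGen.head' hyc hcp)

theorem wellFounded [Finite T] : WellFounded (fun y x => TransGen (IsChild l r) x y) :=
  @Finite.wellFounded_of_trans_of_irrefl _ _ _
    ⟨fun _ _ _ h₁ h₂ => TransGen.trans h₂ h₁⟩ ⟨ht.not_transGen_self⟩

theorem subtree_root : subtree l r root = Set.univ :=
  Set.eq_univ_of_forall ht.mem_subtree_root

theorem eq_of_mem_subtree {x y : T} (hy : y ∈ subtree l r x) (hx : x ∈ subtree l r y) :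
    x = y := by
  by_contra hne
  obtain h | ⟨w, hw, hwy⟩ := ReflTransGen.cases_tail hy
  · exact hne h.symm
  · exact ht.not_transGen_self x (TransGen.trans_left (TransGen.tail' hw hwy) hx)

theorem mem_subtree_or_mem_subtree {a b x : T} (ha : x ∈ subtree l r a)
    (hb : x ∈ subtree l r b) : a ∈ subtree l r b ∨ b ∈ subtree l r a := by
  induction hb generalizing a with
  | refl => exact .inr ha
  | tail hbw hwx ih =>
    obtain rfl | ⟨w', hw', hw'x⟩ := ReflTransGen.cases_tail ha
    · exact .inl (hbw.tail hwx)
    · exact ih (ht.parent_unique hw'x hwx ▸ hw')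

theorem disjoint_subtree {x c₁ c₂ : T} (h₁ : IsChild l r x c₁) (h₂ : IsChild l r x c₂)
    (hne : c₁ ≠ c₂) : Disjoint (subtree l r c₁) (subtree l r c₂) := by
  have below_sibling : ∀ {c c'}, IsChild l r x c → IsChild l r x c' → c ≠ c' →
      c' ∉ subtree l r c := fun hc hc' hne hmem =>
    ht.not_transGen_self x (TransGen.head' hc (ht.mem_subtree_parent hmem (Ne.symm hne) hc'))
  refine Set.disjoint_left.mpr fun t ht₁ ht₂ => ?_
  rcases ht.mem_subtree_or_mem_subtree ht₁ ht₂ with h | h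
  · exact below_sibling h₂ h₁ hne.symm h
  · exact below_sibling h₁ h₂ hne h

end IsRootedTree

section Marks

noncomputable def marks (Y : Finset T) (S : Set T) : ℕ := (S ∩ Y).ncard

variable (Y : Finset T)

theorem marks_mono {S S' : Set T} (h : S ⊆ S') : marks Y S ≤ marks Y S' :=
  Set.ncard_le_ncard (Set.inter_subset_inter_left _ h)

theorem marks_union_le (S S' : Set T) : marks Y (S ∪ S') ≤ marks Y S + marks Y S' := by
  rw [marks, Set.union_inter_distrib_right]
  exact Set.ncard_union_le _ _

theorem marks_union {S S' : Set T} (h : Disjoint S S') :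
    marks Y (S ∪ S') = marks Y S + marks Y S' := by
  rw [marks, Set.union_inter_distrib_right]
  exact Set.ncard_union_eq (h.mono Set.inter_subset_left Set.inter_subset_left)

theorem marks_insert_le (x : T) (S : Set T) : marks Y (insert x S) ≤ marks Y S + 1 := by
  refine (Set.ncard_le_ncard fun t ht => ?_).trans (Set.ncard_insert_le x (S ∩ Y))
  obtain ⟨rfl | hS, hY⟩ := ht
  exacts [Set.mem_insert t _, Set.mem_insert_of_mem x ⟨hS, hY⟩]

@[simp] theorem marks_empty : marks Y ∅ = 0 := by simp [marks]

@[simp] theorem marks_univ : marks Y Set.univ = Y.card := by simp [marks]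

end Marks

section Packing

variable {Y : Finset T} {s : ℕ}

theorem marks_subtree_eq {x u : T} (hu : u ∈ subtree l r x) :
    marks Y (subtree l r x) = marks Y (subtree l r u) + marks Y (context l r (x, some u)) := by
  rw [← marks_union Y
    (Set.disjoint_left.mpr fun t ht ht' => (mem_context_some.mp ht').2 ht)]
  congr 1
  ext t
  simp only [Set.mem_union, mem_context_some]
  exact ⟨fun h => or_iff_not_imp_left.mpr fun h' => ⟨h, h'⟩,
    fun h => h.elim (fun h => subtree_subset hu h) And.left⟩

theorem marks_subtree_le (x : T) :
    marks Y (subtree l r x) ≤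
      marks Y (⋃ c ∈ l x, subtree l r c) + marks Y (⋃ c ∈ r x, subtree l r c) + 1 := by
  have hsub : subtree l r x ⊆
      insert x ((⋃ c ∈ l x, subtree l r c) ∪ ⋃ c ∈ r x, subtree l r c) := by
    intro t ht
    obtain rfl | ⟨c, hc | hc, hct⟩ := ReflTransGen.cases_head ht
    · exact Set.mem_insert _ _
    · exact Set.mem_insert_of_mem x <| .inl <| Set.mem_iUnion₂.mpr ⟨c, hc, hct⟩
    · exact Set.mem_insert_of_mem x <| .inr <| Set.mem_iUnion₂.mpr ⟨c, hc, hct⟩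
  calc marks Y (subtree l r x) ≤ _ := marks_mono Y hsub
    _ ≤ _ := marks_insert_le Y x _
    _ ≤ _ := by gcongr; exact marks_union_le Y _ _

theorem biUnion_some {α β : Type*} (f : α → Set β) (a : α) : ⋃ c ∈ some a, f c = f a := by
  simp only [Option.mem_def, Option.some.injEq, Set.iUnion_iUnion_eq_right]

theorem exists_le_marks_subtree (hs : 0 < s) {o : Option T}
    (h : s ≤ marks Y (⋃ c ∈ o, subtree l r c)) : ∃ c ∈ o, s ≤ marks Y (subtree l r c) := by
  cases o with
  | none => simp at h; omega
  | some c => exact ⟨c, rfl, by simpa using h⟩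

variable (l r Y s) in
/-- The invariant of the greedy construction: the subtree of `x` is cut at `u`, with the
contexts `C` below the cut and fewer than `s` marks above it. The bound `marks_le` is the one
that the three construction steps below preserve and that yields `|Y| / 4s` contexts at the
root. -/
structure IsCutPacking (x u : T) (C : List (T × Option T)) : Prop where
  mem_subtree : u ∈ subtree l r x
  heavy : ∀ c ∈ C, s ≤ marks Y (context l r c)
  subset : ∀ c ∈ C, context l r c ⊆ subtree l r u
  pairwise : C.Pairwise (Disjoint on (context l r))
  residual_lt : marks Y (context l r (x, some u)) < s
  marks_le : marks Y (subtree l r u) + 2 * s ≤ 4 * s * C.length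

theorem isCutPacking_singleton (hs : 0 < s) {x : T} (hx : s ≤ marks Y (subtree l r x))
    (hx' : marks Y (subtree l r x) < 2 * s) : IsCutPacking l r Y s x x [(x, none)] where
  mem_subtree := mem_subtree_self x
  heavy := by simpa [context_none] using hx
  subset := by simp [context_none]
  pairwise := List.pairwise_singleton _ _
  residual_lt := by simpa [context_self] using hs
  marks_le := by simp; omega

theorem IsCutPacking.extend {x c u : T} {C : List (T × Option T)}
    (P : IsCutPacking l r Y s c u C) (hc : IsChild l r x c)
    (hx : marks Y (subtree l r x) ≤ marks Y (subtree l r c) + s) :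
    ∃ u' C', IsCutPacking l r Y s x u' C' := by
  have hux : u ∈ subtree l r x := subtree_subset_of_isChild hc P.mem_subtree
  have hx_split := marks_subtree_eq (Y := Y) hux
  have hc_split := marks_subtree_eq (Y := Y) P.mem_subtree
  by_cases hres : marks Y (context l r (x, some u)) < s
  · exact ⟨u, C, { P with mem_subtree := hux, residual_lt := hres }⟩
  refine ⟨x, (x, some u) :: C, mem_subtree_self x, ?_, ?_, ?_, ?_, ?_⟩
  · simpa [not_lt.mp hres] using P.heavy
  · rintro c' (_ | ⟨_, hc'⟩)
    exacts [context_subset _, (P.subset c' hc').trans (subtree_subset hux)]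
  · refine List.pairwise_cons.mpr ⟨fun c' hc' => ?_, P.pairwise⟩
    exact Set.disjoint_left.mpr fun t ht ht' => (mem_context_some.mp ht).2 (P.subset c' hc' ht')
  · rw [context_self, marks_empty]
    exact (Nat.zero_le _).trans_lt P.residual_lt
  · have := P.residual_lt
    have := P.marks_le
    rw [List.length_cons, Nat.mul_succ]
    omega

theorem IsCutPacking.join {root x c₁ c₂ u₁ u₂ : T} {C₁ C₂ : List (T × Option T)}
    (ht : IsRootedTree l r root) (P₁ : IsCutPacking l r Y s c₁ u₁ C₁)
    (P₂ : IsCutPacking l r Y s c₂ u₂ C₂) (h₁ : IsChild l r x c₁) (h₂ : IsChild l r x c₂)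
    (hne : c₁ ≠ c₂)
    (hx : marks Y (subtree l r x) ≤ marks Y (subtree l r c₁) + marks Y (subtree l r c₂) + 1) :
    IsCutPacking l r Y s x x (C₁ ++ C₂) where
  mem_subtree := mem_subtree_self x
  heavy c hc := (List.mem_append.mp hc).elim (P₁.heavy c) (P₂.heavy c)
  subset c hc := (List.mem_append.mp hc).elim
    (fun hc => (P₁.subset c hc).trans <|
      subtree_subset <| subtree_subset_of_isChild h₁ P₁.mem_subtree)
    (fun hc => (P₂.subset c hc).trans <|
      subtree_subset <| subtree_subset_of_isChild h₂ P₂.mem_subtree)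
  pairwise := List.pairwise_append.mpr ⟨P₁.pairwise, P₂.pairwise, fun c hc c' hc' =>
    (ht.disjoint_subtree h₁ h₂ hne).mono ((P₁.subset c hc).trans (subtree_subset P₁.mem_subtree))
      ((P₂.subset c' hc').trans (subtree_subset P₂.mem_subtree))⟩
  residual_lt := by
    rw [context_self, marks_empty]
    exact (Nat.zero_le _).trans_lt P₁.residual_lt
  marks_le := by
    have := marks_subtree_eq (Y := Y) P₁.mem_subtree
    have := marks_subtree_eq (Y := Y) P₂.mem_subtree
    have := P₁.residual_lt
    have := P₂.residual_lt
    have := P₁.marks_le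
    have := P₂.marks_le
    rw [List.length_append, Nat.mul_add]
    omega

theorem exists_isCutPacking [Finite T] {root : T} (ht : IsRootedTree l r root)
    (hlr : ∀ x c, l x = some c → r x ≠ some c) (hs : 0 < s) (x : T)
    (hx : s ≤ marks Y (subtree l r x)) : ∃ u C, IsCutPacking l r Y s x u C := by
  induction x using ht.wellFounded.induction with
  | _ x ih =>
  have hsplit := marks_subtree_le (l := l) (r := r) (Y := Y) x
  by_cases hL : s ≤ marks Y (⋃ c ∈ l x, subtree l r c) <;>
    by_cases hR : s ≤ marks Y (⋃ c ∈ r x, subtree l r c)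
  · obtain ⟨c₁, h₁, hc₁⟩ := exists_le_marks_subtree hs hL
    obtain ⟨c₂, h₂, hc₂⟩ := exists_le_marks_subtree hs hR
    obtain ⟨u₁, C₁, P₁⟩ := ih c₁ (.single (.inl h₁)) hc₁
    obtain ⟨u₂, C₂, P₂⟩ := ih c₂ (.single (.inr h₂)) hc₂
    exact ⟨x, _, P₁.join ht P₂ (.inl h₁) (.inr h₂) (fun h => hlr x c₁ h₁ (h ▸ h₂))
      (by
        rwa [Option.mem_def.mp h₁, Option.mem_def.mp h₂, biUnion_some, biUnion_some] at hsplit)⟩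
  · obtain ⟨c₁, h₁, hc₁⟩ := exists_le_marks_subtree hs hL
    obtain ⟨u₁, C₁, P₁⟩ := ih c₁ (.single (.inl h₁)) hc₁
    exact P₁.extend (.inl h₁) (by
      rw [Option.mem_def.mp h₁, biUnion_some] at hsplit
      omega)
  · obtain ⟨c₂, h₂, hc₂⟩ := exists_le_marks_subtree hs hR
    obtain ⟨u₂, C₂, P₂⟩ := ih c₂ (.single (.inr h₂)) hc₂
    exact P₂.extend (.inr h₂) (by
      rw [Option.mem_def.mp h₂, biUnion_some] at hsplit
      omega)
  · exact ⟨x, _, isCutPacking_singleton hs hx (by omega)⟩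

theorem exists_disjoint_heavy_contexts [Finite T] {root : T} (ht : IsRootedTree l r root)
    (hlr : ∀ x c, l x = some c → r x ≠ some c) (hs : 0 < s) {n : ℕ}
    (hn : 4 * s * n ≤ Y.card) :
    ∃ c : Fin n → T × Option T, Pairwise (Disjoint on fun i => context l r (c i)) ∧
      ∀ i, s ≤ marks Y (context l r (c i)) := by
  obtain ⟨C, hheavy, hpw, hlen⟩ : ∃ C : List (T × Option T),
      (∀ c ∈ C, s ≤ marks Y (context l r c)) ∧ C.Pairwise (Disjoint on context l r) ∧
        n ≤ C.length := by
    by_cases hY : s ≤ Y.card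
    · obtain ⟨u, C, P⟩ :=
        exists_isCutPacking ht hlr hs root (by rwa [ht.subtree_root, marks_univ])
      refine ⟨C, P.heavy, P.pairwise, Nat.le_of_mul_le_mul_left ?_ (by omega : 0 < 4 * s)⟩
      have := marks_subtree_eq (Y := Y) (ht.mem_subtree_root u)
      rw [ht.subtree_root, marks_univ] at this
      have := P.residual_lt
      have := P.marks_le
      omega
    · obtain rfl : n = 0 := by
        by_contra h
        have := Nat.le_mul_of_pos_right (4 * s) (Nat.pos_of_ne_zero h)
        omega
      exact ⟨[], by simp, .nil, le_rfl⟩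
  have hlt : ∀ i : Fin n, (i : ℕ) < C.length := fun i => i.2.trans_le hlen
  refine ⟨fun i => C[i]'(hlt i), fun i j hij => ?_, fun i => hheavy _ (List.getElem_mem _)⟩
  rcases lt_or_gt_of_ne (Fin.val_injective.ne hij) with h | h
  · exact List.pairwise_iff_getElem.mp hpw _ _ (hlt i) (hlt j) h
  · exact (List.pairwise_iff_getElem.mp hpw _ _ (hlt j) (hlt i) h).symm

end Packing

section Run

variable {Q L : Type*}

variable (l r) in
def IsRun (δ : Option Q → Option Q → L → Q) (lab : T → L) (f : T → Q) : Prop :=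
  ∀ x, f x = δ ((l x).map f) ((r x).map f) (lab x)

theorem IsRun.eqOn_context [Finite T] {root : T} (ht : IsRootedTree l r root)
    {δ : Option Q → Option Q → L → Q} {lab lab' : T → L} {f g : T → Q}
    (hf : IsRun l r δ lab f) (hg : IsRun l r δ lab' g) {c : T × Option T}
    (hhole : ∀ u ∈ c.2, f u = g u) (hlab : ∀ x ∈ context l r c, lab x = lab' x) :
    Set.EqOn f g (context l r c) := by
  intro x hx
  induction x using ht.wellFounded.induction with
  | _ x ih =>
  have hchild : ∀ y, IsChild l r x y → f y = g y := by
    intro y hy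
    by_cases hyc : y ∈ context l r c
    · exact ih y (TransGen.single hy) hyc
    · obtain ⟨u, hu, hyu⟩ : ∃ u ∈ c.2, y ∈ subtree l r u := by
        simpa [context, subtree_subset_of_isChild hy |>.trans (subtree_subset hx.1)
          (mem_subtree_self y)] using hyc
      obtain rfl : y = u := by
        by_contra hne
        exact hx.2 u hu (ht.mem_subtree_parent hyu hne hy)
      exact hhole y hu
  rw [hf x, hg x, hlab x hx, Option.map_congr fun y hy => hchild y (.inl hy),
    Option.map_congr fun y hy => hchild y (.inr hy)]

end Run

section Pebbles

variable [DecidableEq T] {Sig Q : Type*} {k : ℕ}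

def pebbleLabel {n : ℕ} (σ : T → Sig) (p : Fin n → T) (x : T) : Sig × (Fin n → Bool) :=
  (σ x, fun i => if p i = x then true else false)

theorem pebbleLabel_snoc_congr (σ : T → Sig) {a a' : Fin k → T} {b b' x : T}
    (ha : ∀ j, a j = x ↔ a' j = x) (hb : b = x ↔ b' = x) :
    pebbleLabel σ (Fin.snoc a b : Fin (k + 1) → T) x = pebbleLabel σ (Fin.snoc a' b') x := by
  simp only [pebbleLabel, Prod.mk.injEq, true_and]
  funext i
  refine Fin.lastCases ?_ (fun j => ?_) i <;> simp [ha, hb]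

open Classical in
variable (l r) in
/-- The state reached at the top `c.1` of the context `c` from state `q` at its hole, when the
last pebble is on `b` and the other pebbles lie outside `c`; by `contextMap_eq` this does not
depend on where outside `c` they are. Hole states that no placement realises get the junk
value `q`. -/
noncomputable def contextMap (ρ : (Fin (k + 1) → T) → T → Q) (c : T × Option T) (b : T)
    (q : Q) : Q :=
  if h : ∃ a : Fin k → T, (∀ j, a j ∉ context l r c) ∧ ∀ u ∈ c.2, ρ (Fin.snoc a b) u = q then
    ρ (Fin.snoc h.choose b) c.1
  else q

variable {σ : T → Sig}
  {δ : Option Q → Option Q → Sig × (Fin (k + 1) → Bool) → Q} {ρ : (Fin (k + 1) → T) → T → Q}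

variable [Finite T] {root : T} (ht : IsRootedTree l r root)
  (hρ : ∀ p, IsRun l r δ (pebbleLabel σ p) (ρ p))
include ht hρ

theorem contextMap_eq {c : T × Option T} {a : Fin k → T} {b : T} {q : Q}
    (hb : b ∈ context l r c) (ha : ∀ j, a j ∉ context l r c)
    (hq : ∀ u ∈ c.2, ρ (Fin.snoc a b) u = q) :
    contextMap l r ρ c b q = ρ (Fin.snoc a b) c.1 := by
  have h : ∃ a : Fin k → T, (∀ j, a j ∉ context l r c) ∧ ∀ u ∈ c.2, ρ (Fin.snoc a b) u = q :=
    ⟨a, ha, hq⟩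
  obtain ⟨ha₀, hq₀⟩ := h.choose_spec
  rw [contextMap, dif_pos h]
  refine IsRun.eqOn_context ht (hρ _) (hρ _) (fun u hu => (hq₀ u hu).trans (hq u hu).symm)
    (fun x hx => ?_) ⟨mem_subtree_self _, fun u hu hvu => hb.2 u hu (subtree_subset hvu hb.1)⟩
  exact pebbleLabel_snoc_congr σ
    (fun j => iff_of_false (fun h => ha₀ j (h ▸ hx)) (fun h => ha j (h ▸ hx))) Iff.rfl

theorem root_eq_of_contextMap_eq {c : T × Option T} {b b' : T} (hb : b ∈ context l r c)
    (hb' : b' ∈ context l r c) (hF : contextMap l r ρ c b = contextMap l r ρ c b')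
    {a : Fin k → T} (ha : ∀ j, a j ∉ context l r c) :
    ρ (Fin.snoc a b) root = ρ (Fin.snoc a b') root := by
  obtain ⟨v, u?⟩ := c
  have hole : ∀ u ∈ u?, ρ (Fin.snoc a b) u = ρ (Fin.snoc a b') u := fun u hu =>
    IsRun.eqOn_context (c := (u, none)) ht (hρ _) (hρ _) (by simp)
      (fun x hx => pebbleLabel_snoc_congr σ (fun _ => Iff.rfl)
        (iff_of_false (fun h => hb.2 u hu (h ▸ hx.1 :)) (fun h => hb'.2 u hu (h ▸ hx.1 :))))
      ⟨mem_subtree_self u, by simp⟩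
  obtain ⟨q, hq⟩ : ∃ q, ∀ u ∈ u?, ρ (Fin.snoc a b) u = q :=
    ⟨ρ (Fin.snoc a b) (u?.getD v), fun u hu => by rw [Option.mem_def.mp hu, Option.getD_some]⟩
  have hv : ρ (Fin.snoc a b) v = ρ (Fin.snoc a b') v := by
    rw [← contextMap_eq ht hρ hb ha hq, hF,
      contextMap_eq ht hρ hb' ha fun u hu => (hole u hu).symm.trans (hq u hu)]
  by_cases hvr : v = root
  · rwa [← hvr]
  refine IsRun.eqOn_context (c := (root, some v)) ht (hρ _) (hρ _) (by simpa) (fun x hx => ?_)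
    ⟨ht.mem_subtree_root root, ?_⟩
  · exact pebbleLabel_snoc_congr σ (fun _ => Iff.rfl)
      (iff_of_false (fun h => hx.2 v rfl (h ▸ hb.1)) (fun h => hx.2 v rfl (h ▸ hb'.1)))
  · rintro u hu hru
    exact hvr (ht.eq_of_mem_subtree (Option.mem_some_iff.mp hu ▸ hru) (ht.mem_subtree_root v))

theorem exists_pair_root_eq [Finite Q] {Y : Finset T} {c : T × Option T}
    (hc : Nat.card Q ^ Nat.card Q < marks Y (context l r c)) :
    ∃ b b', b ∈ context l r c ∧ b' ∈ context l r c ∧ b ∈ Y ∧ b' ∈ Y ∧ b ≠ b' ∧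
      ∀ a : Fin k → T, (∀ j, a j ∉ context l r c) →
        ρ (Fin.snoc a b) root = ρ (Fin.snoc a b') root := by
  obtain ⟨b, hb, b', hb', hne, hF⟩ := Set.exists_ne_map_eq_of_ncard_lt_of_maps_to
    (t := Set.univ) (by rwa [Set.ncard_univ, Nat.card_fun]) (f := contextMap l r ρ c)
    (fun _ _ => Set.mem_univ _)
  exact ⟨b, b', hb.1, hb'.1, hb.2, hb'.2, hne,
    fun a ha => root_eq_of_contextMap_eq ht hρ hb.1 hb'.1 hF ha⟩

end Pebbles

end PebbleTree

open PebbleTree in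
theorem stmt12_general {T Q Sig : Type*} [Fintype T] [DecidableEq T] [Fintype Q]
    {m rr : ℕ} (hQ : Fintype.card Q = m)
    (l r : T → Option T) (σ : T → Sig) (root : T)
    (hroot : ∀ x : T,
      Relation.ReflTransGen (fun p c => l p = some c ∨ r p = some c) root x)
    (hnoparentroot : ∀ p : T, l p ≠ some root ∧ r p ≠ some root)
    (huniqparent : ∀ p p' x : T, (l p = some x ∨ r p = some x) →
      (l p' = some x ∨ r p' = some x) → p = p')
    (hlr : ∀ x c : T, l x = some c → r x ≠ some c)
    (δ : Option Q → Option Q → Sig × (Fin (rr + 1) → Bool) → Q)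
    (ρ : (Fin (rr + 1) → T) → T → Q)
    (hρ : ∀ (p : Fin (rr + 1) → T) (x : T),
      ρ p x = δ ((l x).map (ρ p)) ((r x).map (ρ p))
        (σ x, fun i => if p i = x then true else false))
    (Y : Finset T) :
    ∃ V : Fin (Y.card / (4 * m ^ m + 4)) → Set T,
      (∀ i j, i ≠ j → Disjoint (V i) (V j)) ∧
      ∃ b b' : Fin (Y.card / (4 * m ^ m + 4)) → T,
        ∀ i, b i ∈ V i ∧ b' i ∈ V i ∧ b i ∈ Y ∧ b' i ∈ Y ∧ b i ≠ b' i ∧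
          ∀ a : Fin rr → T, (∀ j, a j ∉ V i) →
            ρ (Fin.snoc a (b i)) root = ρ (Fin.snoc a (b' i)) root := by
  have ht : IsRootedTree l r root :=
    ⟨hroot, fun p h => h.elim (hnoparentroot p).1 (hnoparentroot p).2, huniqparent _ _ _⟩
  obtain ⟨c, hdisj, hheavy⟩ := exists_disjoint_heavy_contexts ht hlr (s := m ^ m + 1)
    (Y := Y) (Nat.succ_pos _) (n := Y.card / (4 * m ^ m + 4))
    (by linarith [Nat.div_mul_le_self Y.card (4 * m ^ m + 4)])
  choose b b' hb using fun i => exists_pair_root_eq ht hρ (c := c i)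
    (by rw [Nat.card_eq_fintype_card, hQ]; exact hheavy i)
  exact ⟨fun i => context l r (c i), hdisj, b, b', hb⟩

/-- Lemma 3.2: let A be a deterministic bottom-up tree automaton (transition
function δ) with m states over the alphabet Σ × {0,1}^(r+1), running on a finite
rooted binary Σ-labeled tree 𝒯, and let Y be a set of nodes with
|Y| ≥ 2m^m + 2. Then there exist n = ⌊|Y| / (4m^m + 4)⌋ pairwise disjoint sets of
nodes V_1, …, V_n and pairs (b_i, b_i') of distinct nodes of V_i ∩ Y such that
for every r-tuple ā of nodes and every i, if no component of ā lies in V_i, then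
the runs of A with pebbles at (ā, b_i) and at (ā, b_i') label the root with the
same state. Here `ρ p` denotes the run of A with the r+1 pebbles placed at `p`. -/
theorem stmt12 {T Q Sig : Type*} [Fintype T] [DecidableEq T] [Fintype Q]
    {m rr : ℕ} (hQ : Fintype.card Q = m)
    (l r : T → Option T) (σ : T → Sig) (root : T)
    (hroot : ∀ x : T,
      Relation.ReflTransGen (fun p c => l p = some c ∨ r p = some c) root x)
    (hnoparentroot : ∀ p : T, l p ≠ some root ∧ r p ≠ some root)
    (huniqparent : ∀ p p' x : T, (l p = some x ∨ r p = some x) →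
      (l p' = some x ∨ r p' = some x) → p = p')
    (hlr : ∀ x c : T, l x = some c → r x ≠ some c)
    (δ : Option Q → Option Q → Sig × (Fin (rr + 1) → Bool) → Q)
    (ρ : (Fin (rr + 1) → T) → T → Q)
    (hρ : ∀ (p : Fin (rr + 1) → T) (x : T),
      ρ p x = δ ((l x).map (ρ p)) ((r x).map (ρ p))
        (σ x, fun i => if p i = x then true else false))
    (Y : Finset T) (hY : 2 * m ^ m + 2 ≤ Y.card) :
    ∃ V : Fin (Y.card / (4 * m ^ m + 4)) → Set T,
      (∀ i j, i ≠ j → Disjoint (V i) (V j)) ∧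
      ∃ b b' : Fin (Y.card / (4 * m ^ m + 4)) → T,
        ∀ i, b i ∈ V i ∧ b' i ∈ V i ∧ b i ∈ Y ∧ b' i ∈ Y ∧ b i ≠ b' i ∧
          ∀ a : Fin rr → T, (∀ j, a j ∉ V i) →
            ρ (Fin.snoc a (b i)) root = ρ (Fin.snoc a (b' i)) root :=
  stmt12_general hQ l r σ root hroot hnoparentroot huniqparent hlr δ ρ hρ Y
end
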